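/- arXiv:1602.01384 — 3 statements merged into one kernel-verified Lean document; each statement's English description precedes it below -/
import Mathlib

section
/- (Barnes' first lemma.) Let λ₁, λ₂, μ₁, μ₂ ∈ ℂ all have positive real part. Then (1/(2π))·∫_{−∞}^{∞} Γ(λ₁+iτ)·Γ(λ₂+iτ)·Γ(μ₁−iτ)·Γ(μ₂−iτ) dτ = Γ(λ₁+μ₁)·Γ(λ₁+μ₂)·Γ(λ₂+μ₁)·Γ(λ₂+μ₂) / Γ(λ₁+λ₂+μ₁+μ₂). -/
/-!
Write `g_{a,b}(u) = σ(u)^a σ(-u)^b` (`logisticBeta a b`), where `σ` is the logistic sigmoid. The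
substitution `x = σ(u)` turns `∫ g_{a,b}` into the Beta integral `B(a, b)`, and multiplying `g_{a,b}` by
`e^{-2πiuξ}` shifts `(a, b)` to `(a - 2πiξ, b + 2πiξ)`. Hence
`Γ(λ + iτ) Γ(μ - iτ) = Γ(λ + μ) · 𝓕 g_{λ,μ}(-τ/2π)`, so after rescaling `τ` the Barnes integral
is `2π Γ(λ₁+μ₁) Γ(λ₂+μ₂) ∫ 𝓕 g_{λ₁,μ₁} · 𝓕 g_{λ₂,μ₂}`. By Parseval's identity the last integral
is `∫ g_{λ₁,μ₁}(-u) g_{λ₂,μ₂}(u) du = ∫ g_{λ₂+μ₁, λ₁+μ₂} = B(λ₂+μ₁, λ₁+μ₂)`.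
Fourier inversion, on which Parseval rests, applies because `g_{a,b}` is smooth with integrable
first and second derivatives, so that `𝓕 g_{a,b}(ξ) = O(ξ⁻²)`.
-/

open Complex Real MeasureTheory Set
open scoped FourierTransform

theorem integral_fourier_mul_fourier {V : Type*} [NormedAddCommGroup V] [InnerProductSpace ℝ V]
    [FiniteDimensional ℝ V] [MeasurableSpace V] [BorelSpace V] {f g : V → ℂ}
    (hf : Integrable f) (hf_cont : Continuous f) (hFf : Integrable (𝓕 f)) (hg : Integrable g) :
    ∫ ξ, 𝓕 f ξ * 𝓕 g ξ = ∫ x, f (-x) * g x := by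
  have h_adjoint : ∫ ξ, 𝓕 g ξ * 𝓕 f ξ = ∫ x, g x * 𝓕 (𝓕 f) x := by
    simpa using! VectorFourier.integral_bilin_fourierIntegral_eq_flip (.mul ℂ ℂ)
      (L := innerₗ V) continuous_fourierChar continuous_inner hg hFf
  have h_inversion (x : V) : 𝓕 (𝓕 f) x = f (-x) := by
    rw [← neg_neg x, ← fourierInv_eq_fourier_neg, neg_neg,
      hf.fourierInv_fourier_eq hFf hf_cont.continuousAt]
  simp_rw [mul_comm (𝓕 f _), h_adjoint, h_inversion, mul_comm (g _)]

theorem integrable_fourier_of_integrable_deriv_deriv {E : Type*} [NormedAddCommGroup E]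
    [NormedSpace ℂ E] [CompleteSpace E] {f : ℝ → E} (hf : Integrable f)
    (hf_diff : Differentiable ℝ f) (hf' : Integrable (deriv f))
    (hf'_diff : Differentiable ℝ (deriv f)) (hf'' : Integrable (deriv (deriv f))) :
    Integrable (𝓕 f) := by
  set C := (∫ x, ‖f x‖) + ∫ x, ‖deriv (deriv f) x‖
  have h_fourier_deriv_deriv (ξ : ℝ) :
      𝓕 (deriv (deriv f)) ξ = (2 * π * I * ξ) • (2 * π * I * ξ) • 𝓕 f ξ := by
    rw [Real.fourier_deriv hf' hf'_diff hf'', Real.fourier_deriv hf hf_diff hf']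
  have h_bound (ξ : ℝ) : ‖𝓕 f ξ‖ ≤ C * (1 + (2 * π * ξ) ^ 2)⁻¹ := by
    have h0 : ‖𝓕 f ξ‖ ≤ ∫ x, ‖f x‖ :=
      VectorFourier.norm_fourierIntegral_le_integral_norm _ _ _ _ _
    have h2 : ‖𝓕 (deriv (deriv f)) ξ‖ ≤ ∫ x, ‖deriv (deriv f) x‖ :=
      VectorFourier.norm_fourierIntegral_le_integral_norm _ _ _ _ _
    have h_norm : ‖2 * π * I * ξ‖ = |2 * π * ξ| := by
      simp [abs_of_pos pi_pos]
    rw [h_fourier_deriv_deriv, norm_smul, norm_smul, h_norm, ← mul_assoc, ← sq, sq_abs] at h2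
    rw [le_mul_inv_iff₀ (by positivity)]
    linarith
  refine Integrable.mono' ((integrable_inv_one_add_sq.comp_mul_left' two_pi_pos.ne').const_mul C)
    ?_ (.of_forall h_bound)
  exact (VectorFourier.fourierIntegral_continuous continuous_fourierChar continuous_inner
    hf).aestronglyMeasurable

lemma ofReal_sigmoid_ne_zero (u : ℝ) : (sigmoid u : ℂ) ≠ 0 :=
  ofReal_ne_zero.2 (sigmoid_pos u).ne'

lemma log_sigmoid_sub_log_sigmoid_neg (u : ℝ) :
    Real.log (sigmoid u) - Real.log (sigmoid (-u)) = u := by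
  rw [← sigmoid_mul_rexp_neg, Real.log_mul (sigmoid_pos u).ne' (Real.exp_pos _).ne',
    Real.log_exp]
  ring

lemma image_sigmoid_univ : sigmoid '' univ = Ioo 0 1 := by
  rw [image_univ, range_sigmoid]

noncomputable def logisticBeta (a b : ℂ) (u : ℝ) : ℂ :=
  (sigmoid u : ℂ) ^ a * (sigmoid (-u) : ℂ) ^ b

lemma logisticBeta_eq_cexp (a b : ℂ) (u : ℝ) :
    logisticBeta a b u = cexp (a * Real.log (sigmoid u) + b * Real.log (sigmoid (-u))) := by
  rw [logisticBeta, cpow_def_of_ne_zero (ofReal_sigmoid_ne_zero u),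
    cpow_def_of_ne_zero (ofReal_sigmoid_ne_zero (-u)), ← Complex.exp_add,
    ← ofReal_log (sigmoid_pos u).le, ← ofReal_log (sigmoid_pos (-u)).le]
  congr 1
  ring

lemma logisticBeta_neg (a b : ℂ) (u : ℝ) : logisticBeta a b (-u) = logisticBeta b a u := by
  rw [logisticBeta, logisticBeta, neg_neg, mul_comm]

lemma logisticBeta_mul_logisticBeta (a b a' b' : ℂ) (u : ℝ) :
    logisticBeta a b u * logisticBeta a' b' u = logisticBeta (a + a') (b + b') u := by
  simp only [logisticBeta, cpow_add _ _ (ofReal_sigmoid_ne_zero _)]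
  ring

lemma logisticBeta_zero_one (u : ℝ) : logisticBeta 0 1 u = sigmoid (-u) := by
  simp [logisticBeta]

lemma logisticBeta_one_zero (u : ℝ) : logisticBeta 1 0 u = sigmoid u := by
  simp [logisticBeta]

lemma cexp_mul_logisticBeta (s a b : ℂ) (u : ℝ) :
    cexp (s * u) * logisticBeta a b u = logisticBeta (a + s) (b - s) u := by
  have hu : (u : ℂ) = Real.log (sigmoid u) - Real.log (sigmoid (-u)) := by
    exact_mod_cast (log_sigmoid_sub_log_sigmoid_neg u).symm
  rw [logisticBeta_eq_cexp, logisticBeta_eq_cexp, ← Complex.exp_add, hu]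
  congr 1
  ring

lemma hasDerivAt_logisticBeta (a b : ℂ) (u : ℝ) :
    HasDerivAt (logisticBeta a b)
      (a * logisticBeta a (b + 1) u - b * logisticBeta (a + 1) b u) u := by
  have h_log (u : ℝ) : HasDerivAt (fun u ↦ Real.log (sigmoid u)) (sigmoid (-u)) u := by
    convert (hasDerivAt_sigmoid u).log (sigmoid_pos u).ne' using 1
    rw [sigmoid_neg]
    field_simp [(sigmoid_pos u).ne']
  have h_log_neg : HasDerivAt (fun u ↦ Real.log (sigmoid (-u))) (-sigmoid u) u := by
    simpa [Function.comp_def] using (h_log (-u)).comp u (hasDerivAt_neg u)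
  have h_exp := (((h_log u).ofReal_comp.const_mul a).add
    (h_log_neg.ofReal_comp.const_mul b)).cexp
  have h_right : logisticBeta a (b + 1) u = sigmoid (-u) * logisticBeta a b u := by
    rw [← logisticBeta_zero_one, logisticBeta_mul_logisticBeta, zero_add, add_comm]
  have h_left : logisticBeta (a + 1) b u = sigmoid u * logisticBeta a b u := by
    rw [← logisticBeta_one_zero, logisticBeta_mul_logisticBeta, zero_add, add_comm]
  convert h_exp using 1
  · exact funext fun x ↦ logisticBeta_eq_cexp a b x
  · simp only [Pi.add_apply, ← logisticBeta_eq_cexp, h_right, h_left]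
    push_cast
    ring

lemma differentiable_logisticBeta (a b : ℂ) : Differentiable ℝ (logisticBeta a b) :=
  fun u ↦ (hasDerivAt_logisticBeta a b u).differentiableAt

lemma deriv_logisticBeta (a b : ℂ) :
    deriv (logisticBeta a b) =
      fun u ↦ a * logisticBeta a (b + 1) u - b * logisticBeta (a + 1) b u :=
  funext fun u ↦ (hasDerivAt_logisticBeta a b u).deriv

lemma deriv_deriv_logisticBeta (a b : ℂ) :
    deriv (deriv (logisticBeta a b)) = fun u ↦
      a * deriv (logisticBeta a (b + 1)) u - b * deriv (logisticBeta (a + 1) b) u := by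
  rw [deriv_logisticBeta]
  exact funext fun u ↦ ((((differentiable_logisticBeta _ _) u).hasDerivAt.const_mul a).sub
    (((differentiable_logisticBeta _ _) u).hasDerivAt.const_mul b)).deriv

lemma abs_deriv_sigmoid_smul_betaIntegrand (a b : ℂ) (u : ℝ) :
    |sigmoid u * (1 - sigmoid u)| •
        ((sigmoid u : ℂ) ^ (a - 1) * (1 - (sigmoid u : ℂ)) ^ (b - 1)) =
      logisticBeta a b u := by
  have h_one_sub : (1 : ℂ) - sigmoid u = sigmoid (-u) := by
    rw [sigmoid_neg]; push_cast; ring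
  rw [← sigmoid_neg, abs_of_pos (mul_pos (sigmoid_pos u) (sigmoid_pos (-u))), h_one_sub,
    logisticBeta, cpow_sub _ _ (ofReal_sigmoid_ne_zero u),
    cpow_sub _ _ (ofReal_sigmoid_ne_zero (-u)), cpow_one, cpow_one, real_smul]
  push_cast
  field_simp [ofReal_sigmoid_ne_zero u, ofReal_sigmoid_ne_zero (-u)]

lemma integrable_logisticBeta {a b : ℂ} (ha : 0 < a.re) (hb : 0 < b.re) :
    Integrable (logisticBeta a b) := by
  have h := (betaIntegral_convergent ha hb).1.mono_set Ioo_subset_Ioc_self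
  rw [← image_sigmoid_univ, integrableOn_image_iff_integrableOn_abs_deriv_smul MeasurableSet.univ
    (fun u _ ↦ (hasDerivAt_sigmoid u).hasDerivWithinAt) sigmoid_injective.injOn] at h
  simpa only [abs_deriv_sigmoid_smul_betaIntegrand, integrableOn_univ] using h

lemma integral_logisticBeta (a b : ℂ) : ∫ u, logisticBeta a b u = betaIntegral a b := by
  rw [betaIntegral, intervalIntegral.integral_of_le zero_le_one, integral_Ioc_eq_integral_Ioo,
    ← image_sigmoid_univ, integral_image_eq_integral_abs_deriv_smul MeasurableSet.univ
    (fun u _ ↦ (hasDerivAt_sigmoid u).hasDerivWithinAt) sigmoid_injective.injOn, setIntegral_univ]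
  simp_rw [abs_deriv_sigmoid_smul_betaIntegrand]

lemma integrable_deriv_logisticBeta {a b : ℂ} (ha : 0 < a.re) (hb : 0 < b.re) :
    Integrable (deriv (logisticBeta a b)) := by
  rw [deriv_logisticBeta]
  exact ((integrable_logisticBeta ha (by simpa using add_pos hb one_pos)).const_mul a).sub
    ((integrable_logisticBeta (by simpa using add_pos ha one_pos) hb).const_mul b)

lemma integrable_fourier_logisticBeta {a b : ℂ} (ha : 0 < a.re) (hb : 0 < b.re) :
    Integrable (𝓕 (logisticBeta a b)) := by
  refine integrable_fourier_of_integrable_deriv_deriv (integrable_logisticBeta ha hb)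
    (differentiable_logisticBeta a b) (integrable_deriv_logisticBeta ha hb) ?_ ?_
  · rw [deriv_logisticBeta]
    exact ((differentiable_logisticBeta _ _).const_mul a).sub
      ((differentiable_logisticBeta _ _).const_mul b)
  · rw [deriv_deriv_logisticBeta]
    exact ((integrable_deriv_logisticBeta ha (by simpa using add_pos hb one_pos)).const_mul a).sub
      ((integrable_deriv_logisticBeta (by simpa using add_pos ha one_pos) hb).const_mul b)

lemma fourier_logisticBeta (a b : ℂ) (ξ : ℝ) :
    𝓕 (logisticBeta a b) ξ = betaIntegral (a - 2 * π * ξ * I) (b + 2 * π * ξ * I) := by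
  rw [Real.fourier_real_eq_integral_exp_smul, ← integral_logisticBeta]
  congr 1 with u
  rw [smul_eq_mul]
  convert cexp_mul_logisticBeta (-2 * π * ξ * I) a b u using 3
  · push_cast; ring
  all_goals ring

lemma fourier_logisticBeta_div_neg_two_pi {a b : ℂ} (ha : 0 < a.re) (hb : 0 < b.re) (τ : ℝ) :
    𝓕 (logisticBeta a b) (τ / -(2 * π)) =
      Complex.Gamma (a + τ * I) * Complex.Gamma (b - τ * I) / Complex.Gamma (a + b) := by
  have h_shift : 2 * π * ((τ / -(2 * π) : ℝ) : ℂ) * I = -(τ * I) := by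
    push_cast
    field_simp
  rw [fourier_logisticBeta, h_shift, sub_neg_eq_add, ← sub_eq_add_neg,
    betaIntegral_eq_Gamma_mul_div _ _ (by simpa using ha) (by simpa using hb)]
  rw [add_add_sub_cancel]

/-- Barnes' first lemma: for `λ₁, λ₂, μ₁, μ₂` of positive real part,
`(1/2π) ∫_{-∞}^{∞} Γ(λ₁+iτ)Γ(λ₂+iτ)Γ(μ₁−iτ)Γ(μ₂−iτ) dτ
  = Γ(λ₁+μ₁)Γ(λ₁+μ₂)Γ(λ₂+μ₁)Γ(λ₂+μ₂)/Γ(λ₁+λ₂+μ₁+μ₂)`. -/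
theorem barnes_first_lemma (l₁ l₂ m₁ m₂ : ℂ)
    (hl₁ : 0 < l₁.re) (hl₂ : 0 < l₂.re) (hm₁ : 0 < m₁.re) (hm₂ : 0 < m₂.re) :
    (1 / (2 * (π : ℂ))) *
        ∫ τ : ℝ,
          Complex.Gamma (l₁ + (τ : ℂ) * Complex.I) * Complex.Gamma (l₂ + (τ : ℂ) * Complex.I) *
            Complex.Gamma (m₁ - (τ : ℂ) * Complex.I) * Complex.Gamma (m₂ - (τ : ℂ) * Complex.I) =
      Complex.Gamma (l₁ + m₁) * Complex.Gamma (l₁ + m₂) * Complex.Gamma (l₂ + m₁) *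
          Complex.Gamma (l₂ + m₂) / Complex.Gamma (l₁ + l₂ + m₁ + m₂) := by
  have h_integrand (τ : ℝ) :
      Complex.Gamma (l₁ + τ * I) * Complex.Gamma (l₂ + τ * I) *
          Complex.Gamma (m₁ - τ * I) * Complex.Gamma (m₂ - τ * I) =
        Complex.Gamma (l₁ + m₁) * Complex.Gamma (l₂ + m₂) *
          (𝓕 (logisticBeta l₁ m₁) (τ / -(2 * π)) * 𝓕 (logisticBeta l₂ m₂) (τ / -(2 * π))) := by
    rw [fourier_logisticBeta_div_neg_two_pi hl₁ hm₁, fourier_logisticBeta_div_neg_two_pi hl₂ hm₂]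
    field_simp [Gamma_ne_zero_of_re_pos (by simpa using add_pos hl₁ hm₁ : 0 < (l₁ + m₁).re),
      Gamma_ne_zero_of_re_pos (by simpa using add_pos hl₂ hm₂ : 0 < (l₂ + m₂).re)]
  rw [integral_congr_ae (.of_forall h_integrand), integral_const_mul,
    Measure.integral_comp_div (fun ξ ↦ 𝓕 (logisticBeta l₁ m₁) ξ * 𝓕 (logisticBeta l₂ m₂) ξ),
    integral_fourier_mul_fourier (integrable_logisticBeta hl₁ hm₁)
      (differentiable_logisticBeta l₁ m₁).continuous (integrable_fourier_logisticBeta hl₁ hm₁)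
      (integrable_logisticBeta hl₂ hm₂)]
  simp_rw [logisticBeta_neg, logisticBeta_mul_logisticBeta]
  rw [integral_logisticBeta, add_comm m₁ l₂,
    betaIntegral_eq_Gamma_mul_div _ _ (by simpa using add_pos hl₂ hm₁)
      (by simpa using add_pos hl₁ hm₂),
    show l₂ + m₁ + (l₁ + m₂) = l₁ + l₂ + m₁ + m₂ by ring, abs_neg, abs_of_pos two_pi_pos,
    real_smul]
  push_cast
  field_simp
end

section
/- (Gauss's summation theorem.) Let a, b, c ∈ ℂ with c ∉ ℤ_{≤0} and Re(c−a−b) > 0. Then the series ₂F₁(a,b;c;1) = Σ_{k=0}^∞ (a)_k·(b)_k/((c)_k·k!) converges and equals Γ(c)·Γ(c−a−b) / (Γ(c−a)·Γ(c−b)). -/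
/-!
By Euler's limit formula `Γ(z) = lim n^z n! / (z)_{n+1}`, the `k`-th term of `₂F₁(a, b; c; 1)`
behaves like `Γ(c) / (Γ(a) Γ(b)) · k^{a+b-c-1}`, so the series converges absolutely and
`k · term_k → 0`. Telescoping then gives the contiguous relation
`c (c-a-b) F(c) = (c-a) (c-b) F(c+1)`, whence `(c)_n (c-a-b)_n F(c) = (c-a)_n (c-b)_n F(c+n)`.
By Tannery's theorem `F(c+n) → 1`; dividing the identity by `n^c n^{c-a-b} (n!)^2` and letting
`n → ∞` gives `F(c) / (Γ(c) Γ(c-a-b)) = 1 / (Γ(c-a) Γ(c-b))`, again by Euler's formula.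
-/

open Complex Finset

/-- The Pochhammer symbol `(a)_k = a(a+1)⋯(a+k−1)` for `a : ℂ`. -/
noncomputable def cpoch (a : ℂ) (k : ℕ) : ℂ := ∏ i ∈ Finset.range k, (a + (i : ℂ))

open Filter Topology Bornology Asymptotics

@[simp]
lemma cpoch_zero (a : ℂ) : cpoch a 0 = 1 := by simp [cpoch]

lemma cpoch_succ (a : ℂ) (k : ℕ) : cpoch a (k + 1) = cpoch a k * (a + k) :=
  prod_range_succ _ k

lemma cpoch_succ_left (a : ℂ) (k : ℕ) : cpoch a (k + 1) = a * cpoch (a + 1) k := by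
  rw [cpoch, prod_range_succ', cpoch, mul_comm]
  push_cast
  simp only [add_zero, add_assoc, add_comm (1 : ℂ)]

lemma cpoch_eq_eval_ascPochhammer (a : ℂ) (k : ℕ) :
    cpoch a k = (ascPochhammer ℂ k).eval a := by
  induction k with
  | zero => simp
  | succ k ih => rw [cpoch_succ, ascPochhammer_succ_eval, ih]

lemma cpoch_ne_zero {c : ℂ} (hc : ∀ n : ℕ, c + n ≠ 0) (k : ℕ) : cpoch c k ≠ 0 :=
  prod_ne_zero_iff.2 fun i _ => hc i

lemma norm_cpoch_le {z w : ℂ} (h : ∀ i : ℕ, ‖z + i‖ ≤ ‖w + i‖) (k : ℕ) :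
    ‖cpoch z k‖ ≤ ‖cpoch w k‖ := by
  simp only [cpoch, norm_prod]
  exact prod_le_prod (fun _ _ => norm_nonneg _) fun i _ => h i

lemma tendsto_cpoch_add_natCast_cobounded (c : ℂ) {k : ℕ} (hk : k ≠ 0) :
    Tendsto (fun n : ℕ => cpoch (c + n) k) atTop (cobounded ℂ) := by
  have hdeg : 0 < (ascPochhammer ℂ k).degree := by
    rw [← Polynomial.natDegree_pos_iff_degree_pos, ascPochhammer_natDegree]
    exact Nat.pos_of_ne_zero hk
  have hshift : Tendsto (fun n : ℕ => c + n) atTop (cobounded ℂ) :=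
    (tendsto_const_add_cobounded c).comp tendsto_natCast_atTop_cobounded
  rw [← tendsto_norm_atTop_iff_cobounded] at hshift ⊢
  simpa only [cpoch_eq_eval_ascPochhammer] using
    (ascPochhammer ℂ k).tendsto_norm_atTop hdeg hshift

lemma inv_GammaSeq_eq (z : ℂ) (n : ℕ) :
    (GammaSeq z n)⁻¹ = cpoch z (n + 1) / ((n : ℂ) ^ z * n.factorial) :=
  inv_div _ _

lemma tendsto_inv_GammaSeq (z : ℂ) :
    Tendsto (fun n => (GammaSeq z n)⁻¹) atTop (𝓝 (Gamma z)⁻¹) := by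
  by_cases hz : Gamma z = 0
  · obtain ⟨m, rfl⟩ := (Gamma_eq_zero_iff z).1 hz
    rw [hz, inv_zero]
    refine tendsto_const_nhds.congr' ?_
    filter_upwards [eventually_ge_atTop m] with n hn
    rw [inv_GammaSeq_eq, cpoch, prod_eq_zero (mem_range.2 (Nat.lt_succ_of_le hn)) (by simp),
      zero_div]
  · exact (GammaSeq_tendsto_Gamma z).inv₀ hz

noncomputable def hyp2F1Term (a b c : ℂ) (k : ℕ) : ℂ :=
  cpoch a k * cpoch b k / (cpoch c k * (k.factorial : ℂ))

-- `₂F₁(a, b; c; 1)`, with the junk value `0` when the series diverges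
noncomputable def hyp2F1One (a b c : ℂ) : ℂ := ∑' k, hyp2F1Term a b c k

@[simp]
lemma hyp2F1Term_zero (a b c : ℂ) : hyp2F1Term a b c 0 = 1 := by simp [hyp2F1Term]

lemma Gamma_ne_zero_of_add_natCast_ne_zero {c : ℂ} (hc : ∀ n : ℕ, c + n ≠ 0) : Gamma c ≠ 0 :=
  Gamma_ne_zero fun m hm => hc m (by simp [hm])

section GaussTerm

variable {a b c : ℂ}

lemma hyp2F1Term_succ (hc : ∀ n : ℕ, c + n ≠ 0) (k : ℕ) :
    hyp2F1Term a b c (k + 1) = hyp2F1Term a b c k * ((a + k) * (b + k) / ((c + k) * (k + 1))) := by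
  have := cpoch_ne_zero hc k
  have := hc k
  simp only [hyp2F1Term, cpoch_succ, Nat.factorial_succ]
  push_cast
  field_simp

lemma hyp2F1Term_add_one (hc : ∀ n : ℕ, c + n ≠ 0) (k : ℕ) :
    hyp2F1Term a b (c + 1) k = hyp2F1Term a b c k * (c / (c + k)) := by
  have := cpoch_ne_zero hc k
  have := hc k
  have : c ≠ 0 := by simpa using hc 0
  have hshift : cpoch (c + 1) k = cpoch c k * (c + k) / c := by
    rw [eq_div_iff this, mul_comm, ← cpoch_succ_left, cpoch_succ]
  simp only [hyp2F1Term, hshift]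
  field_simp

lemma hyp2F1Term_contiguous (hc : ∀ n : ℕ, c + n ≠ 0) (k : ℕ) :
    c * (c - a - b) * hyp2F1Term a b c k - (c - a) * (c - b) * hyp2F1Term a b (c + 1) k =
      c * k * hyp2F1Term a b c k - c * (k + 1) * hyp2F1Term a b c (k + 1) := by
  have := hc k
  have : (k : ℂ) + 1 ≠ 0 := Nat.cast_add_one_ne_zero k
  rw [hyp2F1Term_add_one hc, hyp2F1Term_succ hc]
  field_simp
  ring

lemma tendsto_hyp2F1Term_succ (hc : ∀ n : ℕ, c + n ≠ 0) :
    Tendsto (fun m : ℕ => (m : ℂ) ^ (c - a - b) * ((m + 1) * hyp2F1Term a b c (m + 1))) atTop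
      (𝓝 (Gamma c / (Gamma a * Gamma b))) := by
  have hΓ : (Gamma c)⁻¹ ≠ 0 := inv_ne_zero (Gamma_ne_zero_of_add_natCast_ne_zero hc)
  have hlim := ((tendsto_inv_GammaSeq a).mul (tendsto_inv_GammaSeq b)).div
    (tendsto_inv_GammaSeq c) hΓ
  rw [div_inv_eq_mul, ← mul_inv, inv_mul_eq_div] at hlim
  refine hlim.congr' ?_
  filter_upwards [eventually_ne_atTop 0] with m hm
  have hm' : (m : ℂ) ≠ 0 := Nat.cast_ne_zero.2 hm
  have := cpoch_ne_zero hc (m + 1)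
  have : (m : ℂ) + 1 ≠ 0 := Nat.cast_add_one_ne_zero m
  have : (m.factorial : ℂ) ≠ 0 := Nat.cast_ne_zero.2 m.factorial_ne_zero
  have hpow : (m : ℂ) ^ (c - a - b) = (m : ℂ) ^ c / ((m : ℂ) ^ a * (m : ℂ) ^ b) := by
    rw [sub_sub, cpow_sub _ _ hm', cpow_add _ _ hm']
  have hpow_ne (z : ℂ) : (m : ℂ) ^ z ≠ 0 := cpow_ne_zero_iff.2 (Or.inl hm')
  have := hpow_ne a
  have := hpow_ne b
  have := hpow_ne c
  simp only [Pi.div_apply, inv_GammaSeq_eq, hyp2F1Term, hpow, Nat.factorial_succ]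
  push_cast
  field_simp

end GaussTerm

section Asymptotics

variable {a b c : ℂ}

lemma isBigO_natCast_cpow (z : ℂ) :
    (fun m : ℕ => (m : ℂ) ^ z) =O[atTop] (fun m : ℕ => (m : ℝ) ^ z.re) := by
  refine IsBigO.of_bound 1 ?_
  filter_upwards [eventually_gt_atTop 0] with m hm
  rw [norm_natCast_cpow_of_pos hm, one_mul]
  exact Real.le_norm_self _

lemma isBigO_mul_hyp2F1Term_succ (hc : ∀ n : ℕ, c + n ≠ 0) :
    (fun m : ℕ => ((m : ℂ) + 1) * hyp2F1Term a b c (m + 1)) =O[atTop]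
      (fun m : ℕ => (m : ℝ) ^ (-(c - a - b).re)) := by
  have hbdd := (tendsto_hyp2F1Term_succ (a := a) (b := b) hc).isBigO_one ℝ
  refine ((isBigO_natCast_cpow (-(c - a - b))).mul hbdd).congr' ?_ (by simp)
  filter_upwards [eventually_ne_atTop 0] with m hm
  rw [cpow_neg, inv_mul_cancel_left₀ ((cpow_ne_zero_iff).2 (Or.inl (Nat.cast_ne_zero.2 hm)))]

lemma summable_norm_hyp2F1Term (hc : ∀ n : ℕ, c + n ≠ 0) (h : 0 < (c - a - b).re) :
    Summable fun k => ‖hyp2F1Term a b c k‖ := by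
  rw [← summable_nat_add_iff 1]
  have hinv : (fun m : ℕ => ((m : ℂ) + 1)⁻¹) =O[atTop] (fun m : ℕ => (m : ℝ) ^ (-1 : ℝ)) := by
    refine IsBigO.of_bound 1 ?_
    filter_upwards [eventually_gt_atTop 0] with m hm
    have hm' : (0 : ℝ) < m := Nat.cast_pos.2 hm
    rw [Real.rpow_neg_one, one_mul, norm_inv, Real.norm_of_nonneg (inv_nonneg.2 hm'.le)]
    have hnorm : ‖(m : ℂ) + 1‖ = m + 1 := by exact_mod_cast Complex.norm_natCast (m + 1)
    exact inv_anti₀ hm' (by linarith)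
  have hbig := (hinv.mul (isBigO_mul_hyp2F1Term_succ (a := a) (b := b) hc)).norm_left
  refine summable_of_isBigO_nat (Real.summable_nat_rpow.2 (by linarith : -1 - (c - a - b).re < -1))
    (hbig.congr' (Eventually.of_forall fun m => ?_) ?_)
  · dsimp only
    rw [inv_mul_cancel_left₀ (Nat.cast_add_one_ne_zero m)]
  · filter_upwards [eventually_gt_atTop 0] with m hm
    rw [← Real.rpow_add (Nat.cast_pos.2 hm), ← sub_eq_add_neg]

lemma summable_hyp2F1Term (hc : ∀ n : ℕ, c + n ≠ 0) (h : 0 < (c - a - b).re) :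
    Summable (hyp2F1Term a b c) :=
  (summable_norm_hyp2F1Term hc h).of_norm

lemma tendsto_natCast_mul_hyp2F1Term (hc : ∀ n : ℕ, c + n ≠ 0) (h : 0 < (c - a - b).re) :
    Tendsto (fun k : ℕ => (k : ℂ) * hyp2F1Term a b c k) atTop (𝓝 0) := by
  rw [← tendsto_add_atTop_iff_nat 1]
  have hdecay : Tendsto (fun m : ℕ => (m : ℝ) ^ (-(c - a - b).re)) atTop (𝓝 0) :=
    (tendsto_rpow_neg_atTop h).comp tendsto_natCast_atTop_atTop
  simpa only [Nat.cast_succ] using (isBigO_mul_hyp2F1Term_succ hc).trans_tendsto hdecay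

end Asymptotics

section Contiguous

variable {a b c : ℂ}

lemma add_natCast_add_natCast_ne_zero (hc : ∀ n : ℕ, c + n ≠ 0) (m : ℕ) :
    ∀ n : ℕ, c + m + n ≠ 0 := fun n => by
  simpa only [Nat.cast_add, add_assoc] using hc (m + n)

lemma re_add_natCast_sub_pos (h : 0 < (c - a - b).re) (m : ℕ) : 0 < (c + m - a - b).re := by
  have : (c + m - a - b).re = (c - a - b).re + m := by
    simp only [sub_re, add_re, natCast_re]
    ring
  rw [this]
  positivity

lemma hyp2F1One_contiguous (hc : ∀ n : ℕ, c + n ≠ 0) (h : 0 < (c - a - b).re) :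
    c * (c - a - b) * hyp2F1One a b c = (c - a) * (c - b) * hyp2F1One a b (c + 1) := by
  have hc₁ : ∀ n : ℕ, c + 1 + n ≠ 0 := by
    simpa only [Nat.cast_one] using add_natCast_add_natCast_ne_zero hc 1
  have h₁ : 0 < (c + 1 - a - b).re := by simpa using re_add_natCast_sub_pos h 1
  have hpartial (n : ℕ) :
      c * (c - a - b) * ∑ k ∈ range n, hyp2F1Term a b c k
        - (c - a) * (c - b) * ∑ k ∈ range n, hyp2F1Term a b (c + 1) k
        = -(c * (n * hyp2F1Term a b c n)) := by
    rw [mul_sum, mul_sum, ← sum_sub_distrib]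
    simp_rw [hyp2F1Term_contiguous hc]
    have := sum_range_sub' (fun k : ℕ => c * k * hyp2F1Term a b c k) n
    push_cast at this
    rw [this]
    ring
  have hlim := (((summable_hyp2F1Term hc h).hasSum.tendsto_sum_nat.const_mul (c * (c - a - b))).sub
    ((summable_hyp2F1Term hc₁ h₁).hasSum.tendsto_sum_nat.const_mul ((c - a) * (c - b))))
  simp_rw [hpartial] at hlim
  have hzero : Tendsto (fun n : ℕ => -(c * (n * hyp2F1Term a b c n))) atTop (𝓝 0) := by
    simpa using ((tendsto_natCast_mul_hyp2F1Term hc h).const_mul c).neg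
  exact sub_eq_zero.1 (tendsto_nhds_unique hlim hzero)

lemma hyp2F1One_contiguous_iterate (hc : ∀ n : ℕ, c + n ≠ 0) (h : 0 < (c - a - b).re) (n : ℕ) :
    cpoch c n * cpoch (c - a - b) n * hyp2F1One a b c =
      cpoch (c - a) n * cpoch (c - b) n * hyp2F1One a b (c + n) := by
  induction n with
  | zero => simp
  | succ n ih =>
    have hstep := hyp2F1One_contiguous (add_natCast_add_natCast_ne_zero hc n)
      (re_add_natCast_sub_pos h n)
    simp only [cpoch_succ, Nat.cast_succ, ← add_assoc]
    linear_combination (c + n) * (c - a - b + n) * ih + cpoch (c - a) n * cpoch (c - b) n * hstep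

end Contiguous

lemma norm_hyp2F1Term_le {a b c a' b' c' : ℂ} (ha : ∀ i : ℕ, ‖a + i‖ ≤ ‖a' + i‖)
    (hb : ∀ i : ℕ, ‖b + i‖ ≤ ‖b' + i‖) (hc : ∀ i : ℕ, ‖c' + i‖ ≤ ‖c + i‖)
    (hc' : ∀ n : ℕ, c' + n ≠ 0) (k : ℕ) :
    ‖hyp2F1Term a b c k‖ ≤ ‖hyp2F1Term a' b' c' k‖ := by
  have := norm_pos_iff.2 (cpoch_ne_zero hc' k)
  simp only [hyp2F1Term, norm_div, norm_mul]
  gcongr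
  · exact mul_pos this (norm_pos_iff.2 (Nat.cast_ne_zero.2 k.factorial_ne_zero))
  · exact norm_cpoch_le ha k
  · exact norm_cpoch_le hb k
  · exact norm_cpoch_le hc k

lemma norm_add_natCast_le (z : ℂ) (i : ℕ) : ‖z + i‖ ≤ ‖(‖z‖ : ℂ) + i‖ := by
  have : ‖(‖z‖ : ℂ) + i‖ = ‖z‖ + i := by
    exact_mod_cast Real.norm_of_nonneg (by positivity : 0 ≤ ‖z‖ + i)
  rw [this]
  simpa using norm_add_le z i

lemma norm_ofReal_add_natCast_le {x : ℝ} {z : ℂ} (hx : 0 ≤ x) (hxz : x ≤ z.re) (i : ℕ) :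
    ‖(x : ℂ) + i‖ ≤ ‖z + i‖ := by
  have : ‖(x : ℂ) + i‖ = x + i := by
    exact_mod_cast Real.norm_of_nonneg (by positivity : 0 ≤ x + i)
  rw [this]
  calc x + i ≤ (z + i).re := by simpa using hxz
    _ ≤ ‖z + i‖ := re_le_norm _

lemma tendsto_hyp2F1One_add_natCast (a b c : ℂ) :
    Tendsto (fun n : ℕ => hyp2F1One a b (c + n)) atTop (𝓝 1) := by
  -- for large `n` the terms are dominated by those of `₂F₁(‖a‖, ‖b‖; ‖a‖ + ‖b‖ + 1; 1)`
  set N : ℝ := ‖a‖ + ‖b‖ + 1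
  have hN : ∀ n : ℕ, (N : ℂ) + n ≠ 0 := fun n => by
    exact_mod_cast (by positivity : 0 < N + n).ne'
  have hdom := summable_norm_hyp2F1Term (a := ‖a‖) (b := ‖b‖) hN
    (by simp only [sub_re, ofReal_re, N]; linarith)
  have hterm (k : ℕ) : Tendsto (fun n : ℕ => hyp2F1Term a b (c + n) k) atTop
      (𝓝 (if k = 0 then 1 else 0)) := by
    rcases k with _ | k
    · simp
    · have hinv := (tendsto_inv₀_cobounded.comp
        (tendsto_cpoch_add_natCast_cobounded c k.succ_ne_zero)).const_mul
        (cpoch a (k + 1) * cpoch b (k + 1) / (k + 1).factorial)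
      rw [mul_zero] at hinv
      refine hinv.congr fun n => ?_
      simp only [Function.comp_apply, hyp2F1Term]
      ring
  have hbound : ∀ᶠ n : ℕ in atTop, ∀ k, ‖hyp2F1Term a b (c + n) k‖ ≤ ‖hyp2F1Term ‖a‖ ‖b‖ N k‖ := by
    filter_upwards [(tendsto_natCast_atTop_atTop (R := ℝ)).eventually_ge_atTop (N - c.re)]
      with n hn k
    refine norm_hyp2F1Term_le (norm_add_natCast_le a)
      (norm_add_natCast_le b) (norm_ofReal_add_natCast_le (by positivity) ?_) hN k
    simp only [add_re, natCast_re]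
    linarith
  simpa [hyp2F1One] using tendsto_tsum_of_dominated_convergence hdom hterm hbound

section Limit

variable {a b c : ℂ}

lemma inv_GammaSeq_mul_hyp2F1One (hc : ∀ n : ℕ, c + n ≠ 0) (h : 0 < (c - a - b).re) {n : ℕ}
    (hn : n ≠ 0) :
    (GammaSeq c n)⁻¹ * (GammaSeq (c - a - b) n)⁻¹ * hyp2F1One a b c =
      (GammaSeq (c - a) n)⁻¹ * (GammaSeq (c - b) n)⁻¹ * hyp2F1One a b (c + (n + 1 : ℕ)) := by
  have hn' : (n : ℂ) ≠ 0 := Nat.cast_ne_zero.2 hn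
  have hpow : (n : ℂ) ^ c * (n : ℂ) ^ (c - a - b) = (n : ℂ) ^ (c - a) * (n : ℂ) ^ (c - b) := by
    rw [← cpow_add _ _ hn', ← cpow_add _ _ hn']
    ring_nf
  simp only [inv_GammaSeq_eq]
  calc _ = cpoch c (n + 1) * cpoch (c - a - b) (n + 1) * hyp2F1One a b c /
        ((n : ℂ) ^ c * (n : ℂ) ^ (c - a - b) * n.factorial ^ 2) := by ring
    _ = _ := by rw [hyp2F1One_contiguous_iterate hc h, hpow]; ring

lemma inv_Gamma_mul_hyp2F1One (hc : ∀ n : ℕ, c + n ≠ 0) (h : 0 < (c - a - b).re) :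
    (Gamma c)⁻¹ * (Gamma (c - a - b))⁻¹ * hyp2F1One a b c =
      (Gamma (c - a))⁻¹ * (Gamma (c - b))⁻¹ := by
  have hlhs := ((tendsto_inv_GammaSeq c).mul (tendsto_inv_GammaSeq (c - a - b))).mul_const
    (hyp2F1One a b c)
  have hrhs := ((tendsto_inv_GammaSeq (c - a)).mul (tendsto_inv_GammaSeq (c - b))).mul
    ((tendsto_hyp2F1One_add_natCast a b c).comp (tendsto_add_atTop_nat 1))
  rw [mul_one] at hrhs
  refine tendsto_nhds_unique (hlhs.congr' ?_) hrhs
  filter_upwards [eventually_ne_atTop 0] with n hn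
  exact inv_GammaSeq_mul_hyp2F1One hc h hn

end Limit

/-- Gauss's summation theorem: if `c` is not a nonpositive integer and `Re(c−a−b) > 0`,
then the series `₂F₁(a,b;c;1) = Σ_k (a)_k (b)_k/((c)_k k!)` converges and equals
`Γ(c)Γ(c−a−b)/(Γ(c−a)Γ(c−b))`. -/
theorem gauss_summation (a b c : ℂ) (hc : ∀ m : ℤ, m ≤ 0 → c ≠ (m : ℂ))
    (h : 0 < (c - a - b).re) :
    Summable (fun k : ℕ => cpoch a k * cpoch b k / (cpoch c k * (k.factorial : ℂ))) ∧
      ∑' k : ℕ, cpoch a k * cpoch b k / (cpoch c k * (k.factorial : ℂ)) =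
        Complex.Gamma c * Complex.Gamma (c - a - b) /
          (Complex.Gamma (c - a) * Complex.Gamma (c - b)) := by
  have hc' : ∀ n : ℕ, c + n ≠ 0 := fun n hn =>
    hc (-n) (by simp) (by push_cast; linear_combination hn)
  refine ⟨summable_hyp2F1Term hc' h, ?_⟩
  have hΓc : Gamma c ≠ 0 := Gamma_ne_zero_of_add_natCast_ne_zero hc'
  have hΓcab : Gamma (c - a - b) ≠ 0 := Gamma_ne_zero_of_re_pos h
  change hyp2F1One a b c = _
  calc hyp2F1One a b c
      = Gamma c * Gamma (c - a - b) * ((Gamma c)⁻¹ * (Gamma (c - a - b))⁻¹ * hyp2F1One a b c) := by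
        field_simp
    _ = _ := by rw [inv_Gamma_mul_hyp2F1One hc' h, div_eq_mul_inv, mul_inv]
end

section
/- [Γ(1/4)·Γ(1/2)²/Γ(3/4)]·₃F₂(1/4, 1/2, 1/4; 3/4, 1; 1) = Γ(1/2)·Γ(1/8)·Γ(3/8) / (2·Γ(5/8)·Γ(7/8)); here ₃F₂(1/4,1/2,1/4;3/4,1;1) is the convergent series Σ_{k=0}^∞ (1/4)_k·(1/2)_k·(1/4)_k/((3/4)_k·(1)_k·k!). -/
/-!
Write `S` for the `₃F₂`-series. Euler's integral gives
`S · B(1/4, 1/2) = ∫₀¹ x^(-3/4) (1 - x)^(-1/2) ₂F₁(1/4, 1/2; 1; x) dx`, and Euler's transformation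
`₂F₁(1/4, 1/2; 1; x) = (1 - x)^(1/4) ₂F₁(3/4, 1/2; 1; x)` turns the right side into
`B(1/4, 3/4) · ₃F₂(3/4, 1/2, 1/4; 1, 1; 1)`. By Clausen's formula this last series is the square of
`₂F₁(1/8, 3/8; 1; 1)`, which Gauss's theorem evaluates to `Γ(1/2) / (Γ(5/8) Γ(7/8))`; the
reflection formula then gives the stated closed form. All terms are positive, so `S` converges by
termwise comparison with the Clausen series, and sums and integrals may be interchanged
(Tonelli, monotone convergence).
-/

open Complex Finset

open MeasureTheory Set Polynomial ProbabilityTheory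
open scoped Real

section Pochhammer

variable {a b : ℝ}

theorem ascPochhammer_eval_le_of_le (ha : 0 < a) (hab : a ≤ b) (k : ℕ) :
    (ascPochhammer ℝ k).eval a ≤ (ascPochhammer ℝ k).eval b := by
  induction k with
  | zero => simp
  | succ k ih =>
    rw [ascPochhammer_succ_eval, ascPochhammer_succ_eval]
    exact mul_le_mul ih (by linarith) (by positivity)
      ((ascPochhammer_pos k a ha).le.trans ih)

theorem ascPochhammer_eval_mul_le_sq {c : ℝ} (ha : 0 ≤ a) (hb : 0 ≤ b)
    (h : ∀ i : ℕ, (a + i) * (b + i) ≤ (c + i) ^ 2) (k : ℕ) :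
    (ascPochhammer ℝ k).eval a * (ascPochhammer ℝ k).eval b ≤ ((ascPochhammer ℝ k).eval c) ^ 2 := by
  induction k with
  | zero => simp
  | succ k ih =>
    simp only [ascPochhammer_succ_eval]
    calc _ = ((ascPochhammer ℝ k).eval a * (ascPochhammer ℝ k).eval b) * ((a + k) * (b + k)) := by
          ring
      _ ≤ ((ascPochhammer ℝ k).eval c) ^ 2 * (c + k) ^ 2 :=
          mul_le_mul ih (h k) (by positivity) (sq_nonneg _)
      _ = _ := by ring

theorem Real.Gamma_add_nat_eq_ascPochhammer_mul (ha : 0 < a) (k : ℕ) :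
    Real.Gamma (a + k) = (ascPochhammer ℝ k).eval a * Real.Gamma a := by
  induction k with
  | zero => simp
  | succ k ih =>
    rw [Nat.cast_succ, ← add_assoc, Real.Gamma_add_one (by positivity), ih,
      ascPochhammer_succ_eval]
    ring

end Pochhammer

section Beta

theorem ProbabilityTheory.beta_comm (p q : ℝ) : beta p q = beta q p := by
  rw [beta, beta, mul_comm, add_comm]

theorem ProbabilityTheory.beta_add_nat_left {b d : ℝ} (hb : 0 < b) (hd : 0 < d) (k : ℕ) :
    beta (b + k) d =
      (ascPochhammer ℝ k).eval b / (ascPochhammer ℝ k).eval (b + d) * beta b d := by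
  have := (Real.Gamma_pos_of_pos (add_pos hb hd)).ne'
  have := (ascPochhammer_pos k _ (add_pos hb hd)).ne'
  rw [beta, beta, add_right_comm, Real.Gamma_add_nat_eq_ascPochhammer_mul hb,
    Real.Gamma_add_nat_eq_ascPochhammer_mul (add_pos hb hd)]
  field_simp

theorem ofReal_cpow_mul_one_sub_cpow {t : ℝ} (ht : t ∈ Set.Icc 0 1) (p q : ℝ) :
    (t : ℂ) ^ ((p : ℂ) - 1) * (1 - (t : ℂ)) ^ ((q : ℂ) - 1) =
      ((t ^ (p - 1) * (1 - t) ^ (q - 1) : ℝ) : ℂ) := by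
  rw [Complex.ofReal_mul, Complex.ofReal_cpow ht.1, Complex.ofReal_cpow (sub_nonneg.2 ht.2)]
  push_cast
  rfl

variable {p q : ℝ}

theorem integrableOn_rpow_mul_one_sub_rpow (hp : 0 < p) (hq : 0 < q) :
    IntegrableOn (fun t : ℝ => t ^ (p - 1) * (1 - t) ^ (q - 1)) (Ioo 0 1) := by
  have h := Complex.betaIntegral_convergent (u := p) (v := q) (by simpa) (by simpa)
  rw [intervalIntegrable_iff_integrableOn_Ioc_of_le zero_le_one] at h
  have h_re : IntegrableOn
      (fun t : ℝ => ((t : ℂ) ^ ((p : ℂ) - 1) * (1 - (t : ℂ)) ^ ((q : ℂ) - 1)).re) (Ioc 0 1) :=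
    h.re
  refine (h_re.congr_fun (fun t ht => ?_) measurableSet_Ioc).mono_set Ioo_subset_Ioc_self
  rw [ofReal_cpow_mul_one_sub_cpow (Ioc_subset_Icc_self ht), Complex.ofReal_re]

theorem integral_rpow_mul_one_sub_rpow (hp : 0 < p) (hq : 0 < q) :
    ∫ t in Ioo (0 : ℝ) 1, t ^ (p - 1) * (1 - t) ^ (q - 1) = beta p q := by
  have h := Complex.betaIntegral_eq_Gamma_mul_div p q (by simpa) (by simpa)
  rw [Complex.betaIntegral, intervalIntegral.integral_of_le zero_le_one,
    setIntegral_congr_fun measurableSet_Ioc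
      (fun t ht => ofReal_cpow_mul_one_sub_cpow (Ioc_subset_Icc_self ht) p q),
    integral_complex_ofReal, integral_Ioc_eq_integral_Ioo, ← Complex.ofReal_add,
    Complex.Gamma_ofReal, Complex.Gamma_ofReal, Complex.Gamma_ofReal] at h
  exact_mod_cast h

end Beta

section TermwiseIntegration

variable {b d : ℝ} {c : ℕ → ℝ} {g : ℝ → ℝ}

theorem rpow_mul_one_sub_rpow_mul_pow {t : ℝ} (ht : 0 < t) (b d : ℝ) (k : ℕ) :
    t ^ (b - 1) * (1 - t) ^ (d - 1) * t ^ k = t ^ (b + k - 1) * (1 - t) ^ (d - 1) := by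
  rw [add_sub_right_comm, Real.rpow_add_natCast ht.ne']
  ring

theorem integrableOn_rpow_mul_one_sub_rpow_mul_pow (hb : 0 < b) (hd : 0 < d) (k : ℕ) :
    IntegrableOn (fun t : ℝ => t ^ (b - 1) * (1 - t) ^ (d - 1) * t ^ k) (Ioo 0 1) :=
  (integrableOn_rpow_mul_one_sub_rpow (p := b + k) (by positivity) hd).congr_fun
    (fun t ht => (rpow_mul_one_sub_rpow_mul_pow ht.1 b d k).symm) measurableSet_Ioo

theorem integral_rpow_mul_one_sub_rpow_mul_pow (hb : 0 < b) (hd : 0 < d) (k : ℕ) :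
    ∫ t in Ioo (0 : ℝ) 1, t ^ (b - 1) * (1 - t) ^ (d - 1) * t ^ k =
      (ascPochhammer ℝ k).eval b / (ascPochhammer ℝ k).eval (b + d) * beta b d := by
  rw [← beta_add_nat_left hb hd, ← integral_rpow_mul_one_sub_rpow (by positivity) hd]
  exact setIntegral_congr_fun measurableSet_Ioo fun t ht =>
    rpow_mul_one_sub_rpow_mul_pow ht.1 b d k

theorem hasSum_integral_beta_mul_of_summable (hb : 0 < b) (hd : 0 < d) (hc : ∀ k, 0 ≤ c k)
    (hg : ∀ t ∈ Ioo (0 : ℝ) 1, HasSum (fun k => c k * t ^ k) (g t))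
    (hs : Summable fun k =>
      c k * ((ascPochhammer ℝ k).eval b / (ascPochhammer ℝ k).eval (b + d))) :
    HasSum
      (fun k => c k * ((ascPochhammer ℝ k).eval b / (ascPochhammer ℝ k).eval (b + d)) *
        beta b d)
      (∫ t in Ioo (0 : ℝ) 1, t ^ (b - 1) * (1 - t) ^ (d - 1) * g t) := by
  set F : ℕ → ℝ → ℝ := fun k t => c k * (t ^ (b - 1) * (1 - t) ^ (d - 1) * t ^ k)
  have hF_int (k : ℕ) : IntegrableOn (F k) (Ioo 0 1) :=
    (integrableOn_rpow_mul_one_sub_rpow_mul_pow hb hd k).const_mul (c k)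
  have hF_val (k : ℕ) : ∫ t in Ioo (0 : ℝ) 1, F k t =
      c k * ((ascPochhammer ℝ k).eval b / (ascPochhammer ℝ k).eval (b + d)) * beta b d := by
    rw [integral_const_mul, integral_rpow_mul_one_sub_rpow_mul_pow hb hd, mul_assoc]
  have hF_norm (k : ℕ) : ∫ t in Ioo (0 : ℝ) 1, ‖F k t‖ = ∫ t in Ioo (0 : ℝ) 1, F k t :=
    setIntegral_congr_fun measurableSet_Ioo fun t ht => Real.norm_of_nonneg <| by
      have := ht.1.le; have : 0 ≤ 1 - t := by linarith [ht.2]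
      have := hc k
      positivity
  have h_swap := integral_tsum_of_summable_integral_norm hF_int
    ((hs.mul_right (beta b d)).congr fun k => by rw [hF_norm, hF_val])
  simp only [hF_val] at h_swap
  rw [(hs.mul_right _).hasSum_iff, h_swap]
  refine setIntegral_congr_fun measurableSet_Ioo fun t ht => ?_
  rw [← ((hg t ht).mul_left (t ^ (b - 1) * (1 - t) ^ (d - 1))).tsum_eq]
  exact tsum_congr fun k => by ring

theorem hasSum_integral_beta_mul_of_integrableOn (hb : 0 < b) (hd : 0 < d) (hc : ∀ k, 0 ≤ c k)
    (hg : ∀ t ∈ Ioo (0 : ℝ) 1, HasSum (fun k => c k * t ^ k) (g t))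
    (hint : IntegrableOn (fun t => t ^ (b - 1) * (1 - t) ^ (d - 1) * g t) (Ioo 0 1)) :
    HasSum
      (fun k => c k * ((ascPochhammer ℝ k).eval b / (ascPochhammer ℝ k).eval (b + d)) *
        beta b d)
      (∫ t in Ioo (0 : ℝ) 1, t ^ (b - 1) * (1 - t) ^ (d - 1) * g t) := by
  set F : ℕ → ℝ → ℝ := fun k t => c k * (t ^ (b - 1) * (1 - t) ^ (d - 1) * t ^ k)
  have hF_nonneg : ∀ t ∈ Ioo (0 : ℝ) 1, ∀ k, 0 ≤ F k t := fun t ht k => by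
    have := ht.1.le; have : 0 ≤ 1 - t := by linarith [ht.2]
    have := hc k
    positivity
  have h_lim := integral_tendsto_of_tendsto_of_monotone
    (f := fun n t => ∑ k ∈ range n, F k t)
    (fun n => integrable_finsetSum _ fun k _ =>
      (integrableOn_rpow_mul_one_sub_rpow_mul_pow hb hd k).const_mul (c k)) hint
    (ae_restrict_of_forall_mem measurableSet_Ioo fun t ht =>
      monotone_nat_of_le_succ fun n => by
        simpa [sum_range_succ] using hF_nonneg t ht n)
    (ae_restrict_of_forall_mem measurableSet_Ioo fun t ht => by
      refine (((hg t ht).mul_left (t ^ (b - 1) * (1 - t) ^ (d - 1))).tendsto_sum_nat).congr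
        fun n => ?_
      simp only [F]
      exact sum_congr rfl fun k _ => by ring)
  rw [hasSum_iff_tendsto_nat_of_nonneg (fun k => by
    have := hc k
    have := beta_pos hb hd
    have := ascPochhammer_pos k b hb
    have := ascPochhammer_pos k _ (add_pos hb hd)
    positivity)]
  refine h_lim.congr fun n => ?_
  rw [integral_finsetSum _ fun k _ =>
    (integrableOn_rpow_mul_one_sub_rpow_mul_pow hb hd k).const_mul (c k)]
  exact sum_congr rfl fun k _ => by
    rw [integral_const_mul, integral_rpow_mul_one_sub_rpow_mul_pow hb hd, mul_assoc]

end TermwiseIntegration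

theorem Ring.choose_add_sub_one_eq_ascPochhammer_div_factorial (a : ℝ) (n : ℕ) :
    Ring.choose (a + n - 1) n = (ascPochhammer ℝ n).eval a / n.factorial := by
  rw [← Ring.multichoose_eq, eq_div_iff (by positivity), mul_comm, ← nsmul_eq_mul,
    Ring.factorial_nsmul_multichoose_eq_ascPochhammer, ascPochhammer_smeval_eq_eval]

theorem hasSum_ascPochhammer_div_factorial_mul_pow (a : ℝ) {x : ℝ} (hx : |x| < 1) :
    HasSum (fun n => (ascPochhammer ℝ n).eval a / n.factorial * x ^ n) ((1 - x) ^ (-a)) := by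
  have h := (Real.one_div_one_sub_rpow_hasFPowerSeriesOnBall_zero a).hasSum (y := x)
    (by simpa [Metric.mem_eball, edist_dist, Real.dist_eq] using hx)
  simpa [FormalMultilinearSeries.ofScalars_apply_eq, mul_comm (x ^ _),
    Ring.choose_add_sub_one_eq_ascPochhammer_div_factorial, Real.rpow_neg
      (by linarith [le_abs_self x] : (0:ℝ) ≤ 1 - x)] using h

section Hypergeometric

variable {a b c x : ℝ}

theorem ordinaryHypergeometricCoefficient_eq (a b c : ℝ) (k : ℕ) :
    ordinaryHypergeometricCoefficient a b c k =
      (ascPochhammer ℝ k).eval a / k.factorial *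
        ((ascPochhammer ℝ k).eval b / (ascPochhammer ℝ k).eval c) := by
  simp only [ordinaryHypergeometricCoefficient]
  ring

theorem ordinaryHypergeometricCoefficient_zero (a b c : ℝ) :
    ordinaryHypergeometricCoefficient a b c 0 = 1 := by
  simp [ordinaryHypergeometricCoefficient]

theorem ordinaryHypergeometricCoefficient_succ (a b c : ℝ) (k : ℕ) :
    ordinaryHypergeometricCoefficient a b c (k + 1) =
      ordinaryHypergeometricCoefficient a b c k * ((a + k) * (b + k) / ((c + k) * (k + 1))) := by
  simp only [ordinaryHypergeometricCoefficient, ascPochhammer_succ_eval, Nat.factorial_succ]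
  push_cast
  rw [mul_inv, mul_inv, div_eq_mul_inv, mul_inv]
  ring

theorem ordinaryHypergeometricCoefficient_nonneg (ha : 0 < a) (hb : 0 < b) (hc : 0 < c) (k : ℕ) :
    0 ≤ ordinaryHypergeometricCoefficient a b c k := by
  have := ascPochhammer_pos k a ha
  have := ascPochhammer_pos k b hb
  have := ascPochhammer_pos k c hc
  simp only [ordinaryHypergeometricCoefficient]
  positivity

theorem hasSum_ordinaryHypergeometric (ha : 0 < a) (hb : 0 < b) (hc : 0 < c) (hx : |x| < 1) :
    HasSum (fun k => ordinaryHypergeometricCoefficient a b c k * x ^ k) (₂F₁ a b c x) := by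
  have h_radius := ordinaryHypergeometricSeries_radius_eq_one ℝ a b c fun k =>
    ⟨by linarith [k.cast_nonneg (α := ℝ)], by linarith [k.cast_nonneg (α := ℝ)],
      by linarith [k.cast_nonneg (α := ℝ)]⟩
  have h := (ordinaryHypergeometricSeries ℝ a b c).hasSum (x := x)
    (by simpa [h_radius, Metric.mem_eball, edist_dist, Real.dist_eq] using hx)
  have h_terms : (fun k => ordinaryHypergeometricCoefficient a b c k * x ^ k) =
      fun k => ordinaryHypergeometricSeries ℝ a b c k fun _ => x :=
    funext fun k => by rw [ordinaryHypergeometricSeries_apply_eq, smul_eq_mul]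
  rw [h_terms]
  exact h

/-- Gauss's summation theorem. -/
theorem hasSum_ordinaryHypergeometricCoefficient (ha : 0 < a) (hb : 0 < b) (habc : a + b < c) :
    HasSum (ordinaryHypergeometricCoefficient a b c)
      (Real.Gamma c * Real.Gamma (c - a - b) / (Real.Gamma (c - a) * Real.Gamma (c - b))) := by
  have hcb : 0 < c - b := by linarith
  have hcab : 0 < c - a - b := by linarith
  have h_kernel : ∀ t ∈ Ioo (0 : ℝ) 1, t ^ (b - 1) * (1 - t) ^ (c - b - 1) * (1 - t) ^ (-a) =
      t ^ (b - 1) * (1 - t) ^ (c - a - b - 1) := fun t ht => by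
    rw [mul_assoc, ← Real.rpow_add (by linarith [ht.2])]
    ring_nf
  have h := hasSum_integral_beta_mul_of_integrableOn
    (c := fun k => (ascPochhammer ℝ k).eval a / k.factorial) hb hcb
    (fun k => by have := ascPochhammer_pos k a ha; positivity)
    (fun t ht => hasSum_ascPochhammer_div_factorial_mul_pow a
      (by rw [abs_of_pos ht.1]; exact ht.2))
    ((integrableOn_rpow_mul_one_sub_rpow hb hcab).congr_fun
      (fun t ht => (h_kernel t ht).symm) measurableSet_Ioo)
  rw [setIntegral_congr_fun measurableSet_Ioo h_kernel,
    integral_rpow_mul_one_sub_rpow hb hcab, add_sub_cancel] at h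
  have h_coeff : ordinaryHypergeometricCoefficient a b c = fun k =>
      (ascPochhammer ℝ k).eval a / k.factorial *
        ((ascPochhammer ℝ k).eval b / (ascPochhammer ℝ k).eval c) * beta b (c - b) /
          beta b (c - b) := funext fun k => by
    rw [ordinaryHypergeometricCoefficient_eq, mul_div_cancel_right₀ _ (beta_pos hb hcb).ne']
  have h_value : Real.Gamma c * Real.Gamma (c - a - b) / (Real.Gamma (c - a) * Real.Gamma (c - b)) =
      beta b (c - a - b) / beta b (c - b) := by
    have := Real.Gamma_pos_of_pos hb
    have := Real.Gamma_pos_of_pos hcb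
    have := Real.Gamma_pos_of_pos (by linarith : 0 < c - a)
    have := Real.Gamma_pos_of_pos (by linarith : 0 < c)
    rw [beta, beta, show b + (c - a - b) = c - a by ring, add_sub_cancel]
    field_simp
  rw [h_coeff, h_value]
  exact h.div_const _

end Hypergeometric

section EulerTransformation

/-! The substitution `x = (1 - u) / (1 - u y)`, an involution of `(0, 1)`, behind Euler's
transformation. -/

variable {y : ℝ}

theorem euler_substitution_mem (hy0 : 0 ≤ y) (hy1 : y < 1) {u : ℝ} (hu : u ∈ Ioo (0 : ℝ) 1) :
    (1 - u) / (1 - u * y) ∈ Ioo (0 : ℝ) 1 := by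
  have hC : 0 < 1 - u * y := by nlinarith [hu.1, hu.2]
  exact ⟨div_pos (by linarith [hu.2]) hC, (div_lt_one hC).2 (by nlinarith [hu.1, hu.2])⟩

theorem one_sub_euler_substitution {u : ℝ} (hC : 0 < 1 - u * y) :
    1 - (1 - u) / (1 - u * y) = u * (1 - y) / (1 - u * y) := by
  field_simp
  ring

theorem one_sub_euler_substitution_mul {u : ℝ} (hC : 0 < 1 - u * y) :
    1 - (1 - u) / (1 - u * y) * y = (1 - y) / (1 - u * y) := by
  field_simp
  ring

theorem euler_substitution_involutive (hy1 : y < 1) {u : ℝ} (hC : 0 < 1 - u * y) :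
    (1 - (1 - u) / (1 - u * y)) / (1 - (1 - u) / (1 - u * y) * y) = u := by
  rw [one_sub_euler_substitution hC, one_sub_euler_substitution_mul hC]
  have : 1 - y ≠ 0 := by linarith
  field_simp

theorem hasDerivAt_euler_substitution {u : ℝ} (hC : 0 < 1 - u * y) :
    HasDerivAt (fun u => (1 - u) / (1 - u * y)) (-(1 - y) / (1 - u * y) ^ 2) u := by
  have h_num : HasDerivAt (fun u : ℝ => 1 - u) (-1) u := by
    simpa using (hasDerivAt_id u).const_sub 1
  have h_den : HasDerivAt (fun u : ℝ => 1 - u * y) (-y) u := by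
    simpa using ((hasDerivAt_id u).mul_const y).const_sub 1
  rw [show -(1 - y) / (1 - u * y) ^ 2 = (-1 * (1 - u * y) - (1 - u) * -y) / (1 - u * y) ^ 2 by
    ring]
  exact h_num.div h_den hC.ne'

theorem rpow_neg_add_add_eq_inv {C : ℝ} (hC : 0 < C) (p q r : ℝ) :
    C ^ (-(p + q + r)) = (C ^ 2 * C ^ (p - 1) * C ^ (q - 1) * C ^ r)⁻¹ := by
  rw [Real.rpow_neg hC.le, ← Real.rpow_natCast, ← Real.rpow_add hC, ← Real.rpow_add hC,
    ← Real.rpow_add hC]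
  norm_num
  ring_nf

theorem euler_substitution_integrand_eq (hy1 : y < 1) (p q r : ℝ) {u : ℝ} (hu : u ∈ Ioo (0 : ℝ) 1)
    (hC : 0 < 1 - u * y) :
    |-(1 - y) / (1 - u * y) ^ 2| *
        (((1 - u) / (1 - u * y)) ^ (p - 1) * (1 - (1 - u) / (1 - u * y)) ^ (q - 1) *
          (1 - (1 - u) / (1 - u * y) * y) ^ r) =
      (1 - y) ^ (q + r) * (u ^ (q - 1) * (1 - u) ^ (p - 1) * (1 - u * y) ^ (-(p + q + r))) := by
  have hA : 0 < 1 - u := by linarith [hu.2]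
  have hD : 0 < 1 - y := by linarith
  rw [one_sub_euler_substitution hC, one_sub_euler_substitution_mul hC,
    abs_div, abs_neg, abs_of_pos hD, abs_of_pos (pow_pos hC 2),
    Real.div_rpow hA.le hC.le, Real.div_rpow (mul_pos hu.1 hD).le hC.le, Real.div_rpow hD.le hC.le,
    Real.mul_rpow hu.1.le hD.le, rpow_neg_add_add_eq_inv hC,
    show q + r = 1 + (q - 1) + r by ring, Real.rpow_add hD, Real.rpow_add hD, Real.rpow_one]
  field_simp

theorem integral_euler_substitution (hy0 : 0 ≤ y) (hy1 : y < 1) (p q r : ℝ) :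
    ∫ x in Ioo (0 : ℝ) 1, x ^ (p - 1) * (1 - x) ^ (q - 1) * (1 - x * y) ^ r =
      (1 - y) ^ (q + r) *
        ∫ u in Ioo (0 : ℝ) 1, u ^ (q - 1) * (1 - u) ^ (p - 1) * (1 - u * y) ^ (-(p + q + r)) := by
  have hC : ∀ u ∈ Ioo (0 : ℝ) 1, 0 < 1 - u * y := fun u hu => by nlinarith [hu.1, hu.2]
  set φ : ℝ → ℝ := fun u => (1 - u) / (1 - u * y)
  have h_image : φ '' Set.Ioo 0 1 = Set.Ioo 0 1 := by
    refine (mapsTo_iff_image_subset.1 fun u hu => euler_substitution_mem hy0 hy1 hu).antisymm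
      fun u hu =>
        ⟨φ u, euler_substitution_mem hy0 hy1 hu, euler_substitution_involutive hy1 (hC u hu)⟩
  have h_inj : InjOn φ (Set.Ioo 0 1) := fun u hu v hv huv => by
    rw [← euler_substitution_involutive hy1 (hC u hu),
      ← euler_substitution_involutive hy1 (hC v hv)]
    exact congrArg (fun w => (1 - w) / (1 - w * y)) huv
  have h := integral_image_eq_integral_abs_deriv_smul measurableSet_Ioo
    (fun u hu => (hasDerivAt_euler_substitution (hC u hu)).hasDerivWithinAt) h_inj
    (fun x => x ^ (p - 1) * (1 - x) ^ (q - 1) * (1 - x * y) ^ r)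
  rw [h_image] at h
  rw [h, ← integral_const_mul]
  exact setIntegral_congr_fun measurableSet_Ioo fun u hu =>
    euler_substitution_integrand_eq hy1 p q r hu (hC u hu)

end EulerTransformation

section EulerIntegral

variable {a b c x : ℝ}

theorem ordinaryHypergeometric_mul_beta (ha : 0 < a) (hb : 0 < b) (hbc : b < c)
    (hx0 : 0 ≤ x) (hx1 : x < 1) :
    ₂F₁ a b c x * beta b (c - b) =
      ∫ t in Ioo (0 : ℝ) 1, t ^ (b - 1) * (1 - t) ^ (c - b - 1) * (1 - t * x) ^ (-a) := by
  have hcb : 0 < c - b := by linarith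
  have h_binom := hasSum_ascPochhammer_div_factorial_mul_pow a (abs_lt.2 ⟨by linarith, hx1⟩)
  have h := hasSum_integral_beta_mul_of_summable
    (c := fun k => (ascPochhammer ℝ k).eval a / k.factorial * x ^ k) hb hcb
    (fun k => by have := ascPochhammer_pos k a ha; positivity)
    (fun t ht => by
      simpa only [mul_assoc, ← mul_pow, mul_comm x] using
        hasSum_ascPochhammer_div_factorial_mul_pow a (x := t * x)
          (by rw [abs_of_nonneg (mul_nonneg ht.1.le hx0)]; nlinarith [ht.1, ht.2]))
    (h_binom.summable.of_nonneg_of_le (fun k => by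
      have := ascPochhammer_pos k a ha
      have := ascPochhammer_pos k b hb
      have := ascPochhammer_pos k _ (add_pos hb hcb)
      positivity) fun k => by
        have := ascPochhammer_pos k a ha
        refine mul_le_of_le_one_right (by positivity) ?_
        rw [div_le_one (ascPochhammer_pos k _ (add_pos hb hcb))]
        exact ascPochhammer_eval_le_of_le hb (by linarith) k)
  rw [add_sub_cancel] at h
  refine ((hasSum_ordinaryHypergeometric ha hb (by linarith)
    (abs_lt.2 ⟨by linarith, hx1⟩)).mul_right _).unique (h.congr_fun fun k => ?_)
  rw [ordinaryHypergeometricCoefficient_eq]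
  ring

/-- Euler's transformation. -/
theorem ordinaryHypergeometric_eq_one_sub_rpow_mul (ha : 0 < a) (hac : a < c) (hb : 0 < b)
    (hbc : b < c) (hx0 : 0 ≤ x) (hx1 : x < 1) :
    ₂F₁ a b c x = (1 - x) ^ (c - a - b) * ₂F₁ (c - a) (c - b) c x := by
  have h_rhs := ordinaryHypergeometric_mul_beta (a := c - a) (b := c - b) (c := c)
    (sub_pos.2 hac) (sub_pos.2 hbc) (by linarith) hx0 hx1
  rw [sub_sub_cancel, beta_comm] at h_rhs
  refine mul_right_cancel₀ (beta_pos hb (sub_pos.2 hbc)).ne' ?_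
  rw [ordinaryHypergeometric_mul_beta ha hb hbc hx0 hx1, integral_euler_substitution hx0 hx1,
    mul_assoc, h_rhs]
  congr 1
  · ring_nf
  · refine setIntegral_congr_fun measurableSet_Ioo fun t _ => ?_
    ring_nf

end EulerIntegral

section ThreeFTwo

/-- The `k`-th term of `₃F₂(a, b, e; c, f; 1)`. -/
noncomputable def hypergeometric32Coeff (a b e c f : ℝ) (k : ℕ) : ℝ :=
  ordinaryHypergeometricCoefficient a b c k *
    ((ascPochhammer ℝ k).eval e / (ascPochhammer ℝ k).eval f)

variable {a b c e f f' : ℝ}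

theorem hypergeometric32Coeff_pos (ha : 0 < a) (hb : 0 < b) (hc : 0 < c) (he : 0 < e)
    (hf : 0 < f) (k : ℕ) : 0 < hypergeometric32Coeff a b e c f k := by
  have := ascPochhammer_pos k a ha
  have := ascPochhammer_pos k b hb
  have := ascPochhammer_pos k c hc
  have := ascPochhammer_pos k e he
  have := ascPochhammer_pos k f hf
  simp only [hypergeometric32Coeff, ordinaryHypergeometricCoefficient]
  positivity

theorem hypergeometric32Coeff_zero (a b e c f : ℝ) : hypergeometric32Coeff a b e c f 0 = 1 := by
  simp [hypergeometric32Coeff, ordinaryHypergeometricCoefficient_zero]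

theorem hypergeometric32Coeff_succ (a b e c f : ℝ) (k : ℕ) :
    hypergeometric32Coeff a b e c f (k + 1) = hypergeometric32Coeff a b e c f k *
      ((a + k) * (b + k) / ((c + k) * (k + 1)) * ((e + k) / (f + k))) := by
  rw [hypergeometric32Coeff, hypergeometric32Coeff, ordinaryHypergeometricCoefficient_succ,
    ascPochhammer_succ_eval, ascPochhammer_succ_eval, mul_div_mul_comm ((ascPochhammer ℝ k).eval e)]
  ring

theorem hasSum_hypergeometric32Coeff_mul_beta (ha : 0 < a) (hb : 0 < b) (hc : 0 < c)
    (he : 0 < e) (hef : e < f) (hs : Summable (hypergeometric32Coeff a b e c f)) :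
    HasSum (fun k => hypergeometric32Coeff a b e c f k * beta e (f - e))
      (∫ t in Ioo (0 : ℝ) 1, t ^ (e - 1) * (1 - t) ^ (f - e - 1) * ₂F₁ a b c t) := by
  have h := hasSum_integral_beta_mul_of_summable (d := f - e) he (sub_pos.2 hef)
    (ordinaryHypergeometricCoefficient_nonneg ha hb hc)
    (fun t ht => hasSum_ordinaryHypergeometric ha hb hc (by rw [abs_of_pos ht.1]; exact ht.2))
  rw [add_sub_cancel] at h
  exact h hs

/-- Euler's transformation of the integrand turns one `₃F₂(1)` into another. -/
theorem tsum_hypergeometric32Coeff_mul_beta_eq (ha : 0 < a) (hac : a < c) (hb : 0 < b)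
    (hbc : b < c) (he : 0 < e) (hef : e < f) (hf' : f' = f + c - a - b) (hef' : e < f')
    (h₁ : Summable (hypergeometric32Coeff a b e c f))
    (h₂ : Summable (hypergeometric32Coeff (c - a) (c - b) e c f')) :
    (∑' k, hypergeometric32Coeff a b e c f k) * beta e (f - e) =
      (∑' k, hypergeometric32Coeff (c - a) (c - b) e c f' k) * beta e (f' - e) := by
  rw [← tsum_mul_right, ← tsum_mul_right,
    (hasSum_hypergeometric32Coeff_mul_beta ha hb (by linarith) he hef h₁).tsum_eq,
    (hasSum_hypergeometric32Coeff_mul_beta (sub_pos.2 hac) (sub_pos.2 hbc) (by linarith)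
      he hef' h₂).tsum_eq]
  refine setIntegral_congr_fun measurableSet_Ioo fun t ht => ?_
  rw [ordinaryHypergeometric_eq_one_sub_rpow_mul ha hac hb hbc ht.1.le ht.2, ← mul_assoc,
    mul_assoc (t ^ (e - 1)), ← Real.rpow_add (by linarith [ht.2]), hf']
  ring_nf

end ThreeFTwo

section Clausen

/-- With `G k = k² (2k - 3 - 3n) u k u (n + 1 - k)`, this says that the summand of
`sum_range_clausen_recurrence` is `G (k + 1) - G k` (a Zeilberger certificate). -/
theorem clausen_certificate {u : ℕ → ℝ}
    (hu : ∀ k : ℕ, u (k + 1) = u k * ((1 / 8 + k) * (3 / 8 + k) / ((1 + k) * (k + 1))))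
    (k j : ℕ) :
    ((k + j + 1 : ℝ)) ^ 3 * (u k * u (j + 1)) -
        (k + j + 1 / 4 : ℝ) * (k + j + 1 / 2) * (k + j + 3 / 4) * (u k * u j) =
      ((k + 1 : ℝ)) ^ 2 * (2 * k - 1 - 3 * (k + j)) * (u (k + 1) * u j) -
        (k : ℝ) ^ 2 * (2 * k - 3 - 3 * (k + j)) * (u k * u (j + 1)) := by
  rw [hu, hu]
  field_simp
  ring

theorem sum_range_clausen_recurrence {u : ℕ → ℝ}
    (hu : ∀ k : ℕ, u (k + 1) = u k * ((1 / 8 + k) * (3 / 8 + k) / ((1 + k) * (k + 1))))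
    (hu0 : u 0 = 1) (n : ℕ) :
    ((n : ℝ) + 1) ^ 3 * ∑ k ∈ range (n + 2), u k * u (n + 1 - k) =
      ((n : ℝ) + 1 / 4) * (n + 1 / 2) * (n + 3 / 4) * ∑ k ∈ range (n + 1), u k * u (n - k) := by
  set G : ℕ → ℝ := fun k => (k : ℝ) ^ 2 * (2 * k - 3 - 3 * n) * (u k * u (n + 1 - k))
  have h_telescope : ∀ k ∈ range (n + 1), ((n : ℝ) + 1) ^ 3 * (u k * u (n + 1 - k)) -
      ((n : ℝ) + 1 / 4) * (n + 1 / 2) * (n + 3 / 4) * (u k * u (n - k)) = G (k + 1) - G k := by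
    intro k hk
    obtain ⟨j, rfl⟩ := Nat.exists_eq_add_of_le (Nat.lt_succ_iff.1 (mem_range.1 hk))
    have h := clausen_certificate hu k j
    simp only [G, show k + j + 1 - k = j + 1 by omega, show k + j + 1 - (k + 1) = j by omega,
      show k + j - k = j by omega]
    push_cast at h ⊢
    linear_combination h
  have h_sum := sum_range_sub G (n + 1)
  rw [← sum_congr rfl h_telescope, sum_sub_distrib, ← mul_sum, ← mul_sum] at h_sum
  rw [sum_range_succ, Nat.sub_self, hu0]
  simp only [G, Nat.sub_self, hu0, Nat.cast_zero] at h_sum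
  push_cast at h_sum
  linear_combination h_sum

theorem sum_range_mul_eq_of_clausen_recurrence {u v : ℕ → ℝ}
    (hu : ∀ k : ℕ, u (k + 1) = u k * ((1 / 8 + k) * (3 / 8 + k) / ((1 + k) * (k + 1))))
    (hv : ∀ k : ℕ, v (k + 1) =
      v k * ((3 / 4 + k) * (1 / 2 + k) / ((1 + k) * (k + 1)) * ((1 / 4 + k) / (1 + k))))
    (hu0 : u 0 = 1) (hv0 : v 0 = 1) (n : ℕ) :
    ∑ k ∈ range (n + 1), u k * u (n - k) = v n := by
  induction n with
  | zero => simp [hu0, hv0]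
  | succ n ih =>
    have h := sum_range_clausen_recurrence hu hu0 n
    rw [ih] at h
    refine mul_left_cancel₀ (by positivity : ((n : ℝ) + 1) ^ 3 ≠ 0) ?_
    rw [h, hv]
    field_simp
    ring

end Clausen

section MirrorQuartic

theorem hasSum_ordinaryHypergeometricCoefficient_one_eighth_three_eighths :
    HasSum (ordinaryHypergeometricCoefficient (1 / 8 : ℝ) (3 / 8) 1)
      (Real.Gamma (1 / 2) / (Real.Gamma (7 / 8) * Real.Gamma (5 / 8))) := by
  have h := hasSum_ordinaryHypergeometricCoefficient (a := 1 / 8) (b := 3 / 8) (c := 1)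
    (by norm_num) (by norm_num) (by norm_num)
  rw [show (1 : ℝ) - 1 / 8 - 3 / 8 = 1 / 2 by norm_num, show (1 : ℝ) - 1 / 8 = 7 / 8 by norm_num,
    show (1 : ℝ) - 3 / 8 = 5 / 8 by norm_num, Real.Gamma_one, one_mul] at h
  exact h

/-- Clausen's formula `₂F₁(1/8, 3/8; 1; 1)² = ₃F₂(3/4, 1/2, 1/4; 1, 1; 1)`. -/
theorem hasSum_hypergeometric32Coeff_clausen {A : ℝ}
    (hA : HasSum (ordinaryHypergeometricCoefficient (1 / 8 : ℝ) (3 / 8) 1) A) :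
    HasSum (hypergeometric32Coeff (3 / 4) (1 / 2) (1 / 4) 1 1) (A * A) := by
  have h_norm : Summable fun k => ‖ordinaryHypergeometricCoefficient (1 / 8 : ℝ) (3 / 8) 1 k‖ :=
    hA.summable.abs
  have h_cauchy := summable_norm_sum_mul_range_of_summable_norm h_norm h_norm
  have h_eq := sum_range_mul_eq_of_clausen_recurrence
    (ordinaryHypergeometricCoefficient_succ _ _ _) (hypergeometric32Coeff_succ _ _ _ _ _)
    (ordinaryHypergeometricCoefficient_zero _ _ _) (hypergeometric32Coeff_zero _ _ _ _ _)
  simp only [h_eq] at h_cauchy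
  rw [← hA.tsum_eq, tsum_mul_tsum_eq_tsum_sum_range_of_summable_norm h_norm h_norm]
  simp only [h_eq]
  exact h_cauchy.of_norm.hasSum

theorem hypergeometric32Coeff_quartic_le_clausen (k : ℕ) :
    hypergeometric32Coeff (1 / 4) (1 / 2) (1 / 4) 1 (3 / 4) k ≤
      hypergeometric32Coeff (3 / 4) (1 / 2) (1 / 4) 1 1 k := by
  set A := (ascPochhammer ℝ k).eval (1 / 4)
  set B := (ascPochhammer ℝ k).eval (1 / 2)
  set C := (ascPochhammer ℝ k).eval 1
  set D := (ascPochhammer ℝ k).eval (3 / 4)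
  have hA : 0 < A := ascPochhammer_pos k _ (by norm_num)
  have hB : 0 < B := ascPochhammer_pos k _ (by norm_num)
  have hC : 0 < C := ascPochhammer_pos k _ (by norm_num)
  have hD : 0 < D := ascPochhammer_pos k _ (by norm_num)
  have h_key : A * C ≤ D ^ 2 := ascPochhammer_eval_mul_le_sq (by norm_num) (by norm_num)
    (fun i => by nlinarith [i.cast_nonneg (α := ℝ)]) k
  calc hypergeometric32Coeff (1 / 4) (1 / 2) (1 / 4) 1 (3 / 4) k
      = ((k.factorial : ℝ)⁻¹ * B * C⁻¹ * A) * (A / D) := by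
        simp only [hypergeometric32Coeff, ordinaryHypergeometricCoefficient, A, B, C, D]
        ring
    _ ≤ ((k.factorial : ℝ)⁻¹ * B * C⁻¹ * A) * (D / C) := by
        refine mul_le_mul_of_nonneg_left ?_ (by positivity)
        rw [div_le_div_iff₀ hD hC]
        nlinarith
    _ = hypergeometric32Coeff (3 / 4) (1 / 2) (1 / 4) 1 1 k := by
        simp only [hypergeometric32Coeff, ordinaryHypergeometricCoefficient, A, B, C, D]
        ring

/-- Euler's reflection formula, together with `sin (π/8) * sin (3π/8) = sin (π/4) / 2`. -/
theorem Real.Gamma_eighths :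
    Real.Gamma (1 / 8) * Real.Gamma (7 / 8) * (Real.Gamma (3 / 8) * Real.Gamma (5 / 8)) =
      2 * Real.Gamma (1 / 4) * Real.Gamma (3 / 4) * Real.Gamma (1 / 2) ^ 2 := by
  have h₁ := Real.Gamma_mul_Gamma_one_sub (1 / 8)
  have h₃ := Real.Gamma_mul_Gamma_one_sub (3 / 8)
  have h₂ := Real.Gamma_mul_Gamma_one_sub (1 / 4)
  rw [show (1 : ℝ) - 1 / 8 = 7 / 8 by norm_num] at h₁
  rw [show (1 : ℝ) - 3 / 8 = 5 / 8 by norm_num] at h₃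
  rw [show (1 : ℝ) - 1 / 4 = 3 / 4 by norm_num] at h₂
  have h_sin₃ : Real.sin (π * (3 / 8)) = Real.cos (π * (1 / 8)) := by
    rw [← Real.sin_pi_div_two_sub]
    ring_nf
  have h_sin₂ : Real.sin (π * (1 / 4)) = 2 * Real.sin (π * (1 / 8)) * Real.cos (π * (1 / 8)) := by
    rw [← Real.sin_two_mul]
    ring_nf
  have h_sin₁ : 0 < Real.sin (π * (1 / 8)) :=
    Real.sin_pos_of_pos_of_lt_pi (by positivity) (by linarith [Real.pi_pos])
  have h_cos₁ : 0 < Real.cos (π * (1 / 8)) :=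
    Real.cos_pos_of_mem_Ioo ⟨by linarith [Real.pi_pos], by linarith [Real.pi_pos]⟩
  rw [h₁, h₃, mul_assoc 2, h₂, Real.Gamma_one_half_eq, Real.sq_sqrt Real.pi_pos.le, h_sin₃,
    h_sin₂]
  field_simp

theorem quartic_g0_eval_real :
    Summable (hypergeometric32Coeff (1 / 4) (1 / 2) (1 / 4) 1 (3 / 4)) ∧
      Real.Gamma (1 / 4) * Real.Gamma (1 / 2) ^ 2 / Real.Gamma (3 / 4) *
          ∑' k, hypergeometric32Coeff (1 / 4) (1 / 2) (1 / 4) 1 (3 / 4) k =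
        Real.Gamma (1 / 2) * Real.Gamma (1 / 8) * Real.Gamma (3 / 8) /
          (2 * Real.Gamma (5 / 8) * Real.Gamma (7 / 8)) := by
  have h_clausen := hasSum_hypergeometric32Coeff_clausen
    hasSum_ordinaryHypergeometricCoefficient_one_eighth_three_eighths
  have h_summable : Summable (hypergeometric32Coeff (1 / 4) (1 / 2) (1 / 4) 1 (3 / 4)) :=
    h_clausen.summable.of_nonneg_of_le
      (fun k => (hypergeometric32Coeff_pos (by norm_num) (by norm_num) (by norm_num) (by norm_num)
        (by norm_num) k).le) hypergeometric32Coeff_quartic_le_clausen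
  have h_euler : (∑' k, hypergeometric32Coeff (1 / 4) (1 / 2) (1 / 4) 1 (3 / 4) k) *
      (Real.Gamma (1 / 4) * Real.Gamma (1 / 2) / Real.Gamma (3 / 4)) =
        Real.Gamma (1 / 2) / (Real.Gamma (7 / 8) * Real.Gamma (5 / 8)) *
          (Real.Gamma (1 / 2) / (Real.Gamma (7 / 8) * Real.Gamma (5 / 8))) *
            (Real.Gamma (1 / 4) * Real.Gamma (3 / 4)) := by
    have h := tsum_hypergeometric32Coeff_mul_beta_eq (a := 1 / 4) (b := 1 / 2) (c := 1)
      (e := 1 / 4) (f := 3 / 4) (f' := 1) (by norm_num) (by norm_num) (by norm_num)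
      (by norm_num) (by norm_num) (by norm_num) (by norm_num) (by norm_num) h_summable
      (by norm_num; exact h_clausen.summable)
    norm_num [h_clausen.tsum_eq, beta, Real.Gamma_one] at h
    exact h
  refine ⟨h_summable, ?_⟩
  have := Real.Gamma_pos_of_pos (by norm_num : (0 : ℝ) < 3 / 4)
  have := Real.Gamma_pos_of_pos (by norm_num : (0 : ℝ) < 5 / 8)
  have := Real.Gamma_pos_of_pos (by norm_num : (0 : ℝ) < 7 / 8)
  calc _ = Real.Gamma (1 / 2) * ((∑' k, hypergeometric32Coeff (1 / 4) (1 / 2) (1 / 4) 1 (3 / 4) k) *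
        (Real.Gamma (1 / 4) * Real.Gamma (1 / 2) / Real.Gamma (3 / 4))) := by ring
    _ = _ := by
      rw [h_euler]
      field_simp
      linear_combination -Real.Gamma_eighths

end MirrorQuartic

theorem cpoch_ofReal (a : ℝ) (k : ℕ) : cpoch a k = (((ascPochhammer ℝ k).eval a : ℝ) : ℂ) := by
  induction k with
  | zero => simp [cpoch]
  | succ k ih =>
    rw [cpoch, prod_range_succ, ← cpoch, ih, ascPochhammer_succ_eval]
    push_cast
    rfl

/-- The evaluation of `g₀(0)` for the mirror quartic (proof of Theorem 7.1):
`Γ(1/4)Γ(1/2)²/Γ(3/4) · ₃F₂(1/4,1/2,1/4;3/4,1;1)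
  = Γ(1/2)Γ(1/8)Γ(3/8)/(2Γ(5/8)Γ(7/8))`, the `₃F₂`-series being convergent. -/
theorem quartic_g0_eval :
    Summable (fun k : ℕ =>
      cpoch (1/4) k * cpoch (1/2) k * cpoch (1/4) k /
        (cpoch (3/4) k * cpoch 1 k * (k.factorial : ℂ))) ∧
    Complex.Gamma (1/4) * Complex.Gamma (1/2) ^ 2 / Complex.Gamma (3/4) *
        ∑' k : ℕ,
          cpoch (1/4) k * cpoch (1/2) k * cpoch (1/4) k /
            (cpoch (3/4) k * cpoch 1 k * (k.factorial : ℂ)) =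
      Complex.Gamma (1/2) * Complex.Gamma (1/8) * Complex.Gamma (3/8) /
        (2 * Complex.Gamma (5/8) * Complex.Gamma (7/8)) := by
  obtain ⟨h_summable, h_value⟩ := quartic_g0_eval_real
  have h_term : (fun k : ℕ => cpoch (1/4) k * cpoch (1/2) k * cpoch (1/4) k /
      (cpoch (3/4) k * cpoch 1 k * (k.factorial : ℂ))) =
      fun k => ((hypergeometric32Coeff (1 / 4) (1 / 2) (1 / 4) 1 (3 / 4) k : ℝ) : ℂ) := by
    ext k
    simp only [hypergeometric32Coeff, ordinaryHypergeometricCoefficient]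
    push_cast [← cpoch_ofReal]
    ring
  rw [h_term]
  refine ⟨Complex.summable_ofReal.2 h_summable, ?_⟩
  have h := congrArg (fun r : ℝ => (r : ℂ)) h_value
  push_cast [← Complex.Gamma_ofReal] at h
  exact h
end
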